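/- Let J be a strongly stable Artinian monomial ideal in R = k[x_1,…,x_n]. Suppose that for each 2 ≤ i ≤ n−1 there exists an integer t_i such that f_{i+1}(α) = t_i − 2|α| + 1 for every α ∈ J_i. Then J is almost reverse lexicographic. (This is the monomial-ideal content of the paper's Corollary: if for each 0 ≤ s ≤ n−3 there exist generic linear forms L_1,…,L_s with I+(L_1,…,L_s) having the strong Stanley property, then gin(I) is almost reverse lexicographic.) -/

import Mathlib

/-!
Suppose `M ∉ S` is greater in revlex order than a minimal generator `N` of the same degree,
and let `x_{k+1}` be the last variable dividing `N`. Then `M` only involves `x_1,…,x_{k+1}` and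
`M_{k+1} ≤ N_{k+1}`. Let `a`, `b` be the exponents of `N`, `M` in the first `k` variables.
Minimality of `N` gives `f_{k+1}(a) = N_{k+1}`, `M ∉ S` gives `M_{k+1} < f_{k+1}(b)`, and
equal degrees give `|b| - |a| = N_{k+1} - M_{k+1} ≥ 0`. This is impossible as soon as
`f_{k+1}` drops by at least `|b| - |a|` from `a` to `b`: for `k = 0` there is nothing to
prove, for `k = 1` strong stability makes `f_2` strictly decreasing until it reaches `0`,
and for `k ≥ 2` the hypothesis makes it drop by `2(|b| - |a|)`.
-/

/-
Combinatorial framework: a monomial ideal in `k[x_1,…,x_n]` is encoded by its set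
of monomials, viewed as exponent vectors in `Fin n → ℕ` (with `x_1,…,x_n`
corresponding to indices `0,…,n-1`).
-/

/-- A monomial ideal: a set of exponent vectors closed under multiplication by
arbitrary monomials. -/
def IsMonomialIdeal {n : ℕ} (S : Set (Fin n → ℕ)) : Prop :=
  ∀ m ∈ S, ∀ m' : Fin n → ℕ, m + m' ∈ S

/-- `R/J` is a finite-dimensional `k`-vector space iff the set of standard
monomials (the complement of the monomial set of `J`) is finite. -/
def IsArtinianMonomialSet {n : ℕ} (S : Set (Fin n → ℕ)) : Prop :=
  Sᶜ.Finite

/-- Strong stability: if `m ∈ J`, `x_j ∣ m` and `i < j`, then `x_i · m / x_j ∈ J`. -/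
def IsStronglyStable {n : ℕ} (S : Set (Fin n → ℕ)) : Prop :=
  ∀ m ∈ S, ∀ i j : Fin n, i < j → 0 < m j →
    (fun l => if l = i then m i + 1 else if l = j then m j - 1 else m l) ∈ S

/-- `x^a < x^b` in the reverse lexicographic order with `x_1 > ⋯ > x_n`
(used to compare monomials of the same degree): at the last index where the
exponents differ, `a` has the larger exponent. -/
def RevLexLT {n : ℕ} (a b : Fin n → ℕ) : Prop :=
  ∃ j : Fin n, b j < a j ∧ ∀ l : Fin n, j < l → a l = b l

/-- Total degree of a monomial. -/
def mdeg {n : ℕ} (m : Fin n → ℕ) : ℕ := ∑ l, m l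

/-- `m` is a minimal (monomial) generator of the monomial ideal `S`. -/
def IsMinGen {n : ℕ} (S : Set (Fin n → ℕ)) (m : Fin n → ℕ) : Prop :=
  m ∈ S ∧ ∀ m' ∈ S, (∀ l, m' l ≤ m l) → m' = m

/-- Almost reverse lexicographic: `S` contains every monomial that is greater in
reverse lexicographic order than some minimal generator of `S` of the same degree. -/
def AlmostRevLex {n : ℕ} (S : Set (Fin n → ℕ)) : Prop :=
  ∀ M N : Fin n → ℕ, IsMinGen S N → mdeg M = mdeg N → RevLexLT N M → M ∈ S

/-- The exponent vector of `x_1^{α 0} ⋯ x_i^{α (i-1)} · x_{i+1}^t`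
(0-based: positions `0,…,i-1` carry `α`, position `i` carries `t`). -/
def monVec (n i : ℕ) (α : ℕ → ℕ) (t : ℕ) : Fin n → ℕ :=
  fun l => if (l : ℕ) < i then α l else if (l : ℕ) = i then t else 0

/-- `fF S i α = min {t : x_1^{α 0}⋯x_i^{α (i-1)} · x_{i+1}^t ∈ S}`; this is the
paper's `f_{i+1}(α_1,…,α_i)` (0-based `i`, so `fF S 0 _` is the paper's `f_1`). -/
noncomputable def fF {n : ℕ} (S : Set (Fin n → ℕ)) (i : ℕ) (α : ℕ → ℕ) : ℕ :=
  sInf {t | monVec n i α t ∈ S}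

/-- The paper's set `J_i`: tuples `(α_1,…,α_i)` (recorded in positions
`0,…,i-1` and padded by zeros) with `α_1 < f_1` and
`α_j < f_j(α_1,…,α_{j-1})` for `2 ≤ j ≤ i`. -/
def JSet {n : ℕ} (S : Set (Fin n → ℕ)) (i : ℕ) : Set (ℕ → ℕ) :=
  {α | (∀ l, i ≤ l → α l = 0) ∧ ∀ j, j < i → α j < fF S j α}

/-- `|α| = α_1 + ⋯ + α_i`. -/
def asum (i : ℕ) (α : ℕ → ℕ) : ℕ := ∑ j ∈ Finset.range i, α j

/-- The tuple `(0,…,0,s)` of length `i`. -/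
def lastVec (i s : ℕ) : ℕ → ℕ := fun l => if l = i - 1 then s else 0

/-- Reverse lexicographic comparison of `i`-tuples: `x^a < x^b`. -/
def RevLexLT' (a b : ℕ → ℕ) : Prop :=
  ∃ j : ℕ, b j < a j ∧ ∀ l, j < l → a l = b l

open Function

section

variable {n : ℕ} {S : Set (Fin n → ℕ)}

/-- The exponents `(m_1,…,m_k)` of the first `k` variables of `m`, padded by zeros. -/
def prefixExp (m : Fin n → ℕ) (k : ℕ) : ℕ → ℕ :=
  fun l => if h : l < k ∧ l < n then m ⟨l, h.2⟩ else 0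

lemma prefixExp_of_lt (m : Fin n → ℕ) {k : ℕ} {l : Fin n} (hl : (l : ℕ) < k) :
    prefixExp m k l = m l := by
  simp [prefixExp, hl]

lemma prefixExp_of_le (m : Fin n → ℕ) {k l : ℕ} (hl : k ≤ l) : prefixExp m k l = 0 := by
  simp only [prefixExp]
  split_ifs <;> omega

lemma prefixExp_eq_of_lt (m : Fin n → ℕ) {j k l : ℕ} (hl : l < j) (hj : j ≤ k) :
    prefixExp m k l = prefixExp m j l := by
  unfold prefixExp
  split_ifs <;> first | rfl | omega

lemma prefixExp_update (m : Fin n → ℕ) {k : ℕ} {K : Fin n} (hK : k ≤ K) (v : ℕ) :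
    prefixExp (update m K v) k = prefixExp m k := by
  funext l
  unfold prefixExp
  split_ifs with h
  · refine update_of_ne (fun h' => ?_) _ _
    have := congrArg Fin.val h'
    simp only at this
    omega
  · rfl

lemma IsMonomialIdeal.mem_of_le (hS : IsMonomialIdeal S) {m m' : Fin n → ℕ} (hm : m ∈ S)
    (h : m ≤ m') : m' ∈ S := by
  simpa [add_tsub_cancel_of_le h] using hS m hm (m' - m)

lemma monVec_congr {i : ℕ} {α β : ℕ → ℕ} (h : ∀ l < i, α l = β l) (t : ℕ) :
    monVec n i α t = monVec n i β t := by
  funext l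
  unfold monVec
  split_ifs with hl
  · rw [h l hl]
  all_goals rfl

lemma fF_congr (S : Set (Fin n → ℕ)) {i : ℕ} {α β : ℕ → ℕ} (h : ∀ l < i, α l = β l) :
    fF S i α = fF S i β := by
  simp only [fF, monVec_congr h]

lemma monVec_mono {i : ℕ} {α β : ℕ → ℕ} (h : ∀ l < i, α l ≤ β l) {t t' : ℕ}
    (ht : t ≤ t') :
    monVec n i α t ≤ monVec n i β t' := by
  intro l
  unfold monVec
  split_ifs with h1
  · exact h l h1
  · exact ht
  · exact le_rfl

lemma monVec_prefixExp_le (m : Fin n → ℕ) (i : Fin n) :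
    monVec n i (prefixExp m i) (m i) ≤ m := by
  intro l
  unfold monVec
  split_ifs with h1 h2
  · rw [prefixExp_of_lt m h1]
  · rw [Fin.ext h2]
  · exact Nat.zero_le _

lemma monVec_prefixExp_eq (m : Fin n → ℕ) (i : Fin n) (hm : ∀ l, i < l → m l = 0) :
    monVec n i (prefixExp m i) (m i) = m := by
  refine le_antisymm (monVec_prefixExp_le m i) fun l => ?_
  unfold monVec
  split_ifs with h1 h2
  · rw [prefixExp_of_lt m h1]
  · rw [Fin.ext h2]
  · exact (hm l (by rw [Fin.lt_def]; omega)).le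

lemma mdeg_monVec {i : ℕ} (hi : i < n) (α : ℕ → ℕ) (t : ℕ) :
    mdeg (monVec n i α t) = asum i α + t := by
  obtain ⟨d, rfl⟩ := Nat.exists_eq_add_of_lt hi
  have tail : ∀ x,
      (if i + 1 + x < i then α (i + 1 + x) else if i + 1 + x = i then t else 0) = 0 :=
    fun x => by split_ifs <;> omega
  have head : ∀ l ∈ Finset.range i, (if l < i then α l else if l = i then t else 0) = α l :=
    fun l hl => if_pos (Finset.mem_range.1 hl)
  simp only [mdeg, monVec]
  rw [Fin.sum_univ_eq_sum_range (fun l => if l < i then α l else if l = i then t else 0),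
    Nat.add_right_comm, Finset.sum_range_add, Finset.sum_range_succ, Finset.sum_congr rfl head]
  simp [tail, asum]

lemma mdeg_eq_asum_add (m : Fin n → ℕ) (i : Fin n) (hm : ∀ l, i < l → m l = 0) :
    mdeg m = asum i (prefixExp m i) + m i := by
  rw [← mdeg_monVec i.isLt, monVec_prefixExp_eq m i hm]

lemma fF_le {i : ℕ} {α : ℕ → ℕ} {t : ℕ} (h : monVec n i α t ∈ S) : fF S i α ≤ t :=
  Nat.sInf_le h

lemma monVec_fF_mem (hArt : IsArtinianMonomialSet S) {i : ℕ} (hi : i < n) (α : ℕ → ℕ) :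
    monVec n i α (fF S i α) ∈ S := by
  refine Nat.sInf_mem (s := {t | monVec n i α t ∈ S}) ?_
  by_contra h
  have hinj : Injective (monVec n i α) := fun t t' htt' => by
    simpa [monVec] using congrFun htt' ⟨i, hi⟩
  exact Set.infinite_range_of_injective hinj
    (hArt.subset (Set.range_subset_iff.2 fun t ht => h ⟨t, ht⟩))

lemma lt_fF_of_notMem (hIdeal : IsMonomialIdeal S) (hArt : IsArtinianMonomialSet S)
    {m : Fin n → ℕ} (hm : m ∉ S) (i : Fin n) : m i < fF S i (prefixExp m i) := by
  by_contra! h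
  exact hm (hIdeal.mem_of_le (monVec_fF_mem hArt i.isLt _)
    ((monVec_mono (fun _ _ => le_rfl) h).trans (monVec_prefixExp_le m i)))

lemma fF_le_of_mem {m : Fin n → ℕ} (hm : m ∈ S) (i : Fin n) (hm0 : ∀ l, i < l → m l = 0) :
    fF S i (prefixExp m i) ≤ m i :=
  fF_le (by rwa [monVec_prefixExp_eq m i hm0])

lemma prefixExp_mem_JSet (hIdeal : IsMonomialIdeal S) (hArt : IsArtinianMonomialSet S)
    {m : Fin n → ℕ} (hm : m ∉ S) {k : ℕ} (hk : k ≤ n) : prefixExp m k ∈ JSet S k := by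
  refine ⟨fun l hl => prefixExp_of_le m hl, fun j hj => ?_⟩
  have h := lt_fF_of_notMem hIdeal hArt hm ⟨j, by omega⟩
  convert h using 1
  · simp [prefixExp, hj, show j < n by omega]
  · exact fF_congr S fun l hl => prefixExp_eq_of_lt m hl hj.le

lemma IsMinGen.update_pred_notMem {N : Fin n → ℕ} (hN : IsMinGen S N) {K : Fin n}
    (hK : N K ≠ 0) : update N K (N K - 1) ∉ S := fun h => by
  have := congrFun (hN.2 _ h fun l => by rcases eq_or_ne l K with rfl | hl <;> simp [*]) K
  simp only [update_self] at this
  omega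

lemma IsMinGen.prefixExp_mem_JSet (hIdeal : IsMonomialIdeal S)
    (hArt : IsArtinianMonomialSet S) {N : Fin n → ℕ} (hN : IsMinGen S N) {K : Fin n}
    (hK : N K ≠ 0) : prefixExp N K ∈ JSet S K := by
  simpa only [prefixExp_update N le_rfl] using
    _root_.prefixExp_mem_JSet hIdeal hArt (hN.update_pred_notMem hK) K.isLt.le

lemma IsMinGen.fF_prefixExp_eq (hIdeal : IsMonomialIdeal S) (hArt : IsArtinianMonomialSet S)
    {N : Fin n → ℕ} (hN : IsMinGen S N) {K : Fin n} (hK : N K ≠ 0)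
    (hN0 : ∀ l, K < l → N l = 0) : fF S K (prefixExp N K) = N K := by
  have hle := fF_le_of_mem hN.1 K hN0
  have hlt := lt_fF_of_notMem hIdeal hArt (hN.update_pred_notMem hK) K
  rw [prefixExp_update N le_rfl, update_self] at hlt
  omega

lemma IsStronglyStable.monVec_update_mem (hSS : IsStronglyStable S) {i j : ℕ} (hji : j < i)
    (hi : i < n) {α : ℕ → ℕ} {t : ℕ} (h : monVec n i α (t + 1) ∈ S) :
    monVec n i (update α j (α j + 1)) t ∈ S := by
  convert hSS _ h ⟨j, by omega⟩ ⟨i, hi⟩ hji (by simp [monVec]) using 1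
  funext l
  simp only [monVec, update_apply, Fin.ext_iff]
  split_ifs <;> first | rfl | omega

lemma fF_update_succ_lt (hIdeal : IsMonomialIdeal S) (hArt : IsArtinianMonomialSet S)
    (hSS : IsStronglyStable S) {i j : ℕ} (hji : j < i) (hi : i < n) (α : ℕ → ℕ)
    (hpos : 0 < fF S i (update α j (α j + 1))) :
    fF S i (update α j (α j + 1)) < fF S i α := by
  have hmem := monVec_fF_mem hArt hi α
  cases h : fF S i α with
  | zero =>
    rw [h] at hmem
    have hle : α ≤ update α j (α j + 1) := fun l => by
      rcases eq_or_ne l j with rfl | hl <;> simp [*]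
    have := fF_le (hIdeal.mem_of_le hmem (monVec_mono (fun l _ => hle l) le_rfl))
    omega
  | succ t =>
    rw [h] at hmem
    have := fF_le (hSS.monVec_update_mem hji hi hmem)
    omega

lemma fF_update_add_le (hIdeal : IsMonomialIdeal S) (hArt : IsArtinianMonomialSet S)
    (hSS : IsStronglyStable S) {i j : ℕ} (hji : j < i) (hi : i < n) (α : ℕ → ℕ) (c : ℕ)
    (hpos : 0 < fF S i (update α j (α j + c))) :
    fF S i (update α j (α j + c)) + c ≤ fF S i α := by
  induction c with
  | zero => simp
  | succ c ih =>
    set β := update α j (α j + c)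
    have hβ : update α j (α j + (c + 1)) = update β j (β j + 1) := by
      simp [β, add_assoc]
    rw [hβ] at hpos ⊢
    have hlt := fF_update_succ_lt hIdeal hArt hSS hji hi β hpos
    have := ih (by omega)
    omega

lemma fF_add_le_of_asum_le (hIdeal : IsMonomialIdeal S) (hArt : IsArtinianMonomialSet S)
    (hSS : IsStronglyStable S)
    (hSSP : ∀ i, 2 ≤ i → i ≤ n - 1 → ∃ t : ℤ,
      ∀ α ∈ JSet S i, (fF S i α : ℤ) = t - 2 * (asum i α : ℤ) + 1)
    {k : ℕ} (hk : k < n) {a b : ℕ → ℕ} (ha : a ∈ JSet S k) (hb : b ∈ JSet S k)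
    (hab : asum k a ≤ asum k b) (hpos : 0 < fF S k b) :
    fF S k b + (asum k b - asum k a) ≤ fF S k a := by
  rcases (by omega : k = 0 ∨ k = 1 ∨ 2 ≤ k) with rfl | rfl | hk2
  · rw [fF_congr S (α := b) (β := a) fun l hl => absurd hl l.not_lt_zero]
    simp [asum]
  · simp only [asum, Finset.sum_range_one] at hab ⊢
    have hb' : fF S 1 b = fF S 1 (update a 0 (a 0 + (b 0 - a 0))) :=
      fF_congr S fun l hl => by
        obtain rfl : l = 0 := by omega
        simp only [update_self]
        omega
    rw [hb'] at hpos ⊢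
    exact fF_update_add_le hIdeal hArt hSS zero_lt_one hk a _ hpos
  · obtain ⟨t, ht⟩ := hSSP k hk2 (by omega)
    have := ht a ha
    have := ht b hb
    omega

end

lemma exists_last_ne_zero {n : ℕ} {M : Type*} [Zero M] {f : Fin n → M} {j : Fin n}
    (hj : f j ≠ 0) : ∃ K, j ≤ K ∧ f K ≠ 0 ∧ ∀ l, K < l → f l = 0 := by
  classical
  set s := Finset.univ.filter fun l => f l ≠ 0
  have hjs : j ∈ s := by simp [s, hj]
  refine ⟨s.max' ⟨j, hjs⟩, s.le_max' j hjs, (Finset.mem_filter.1 (s.max'_mem _)).2,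
    fun l hl => ?_⟩
  by_contra h
  exact (s.le_max' l (by simp [s, h])).not_gt hl

/-- Corollary, monomial-ideal content.  Let `J` be a strongly
stable Artinian monomial ideal in `k[x_1,…,x_n]`.  If for each `2 ≤ i ≤ n-1`
there is an integer `t_i` with `f_{i+1}(α) = t_i - 2|α| + 1` for every
`α ∈ J_i` (the strong Stanley property of the successive generic linear
sections), then `J` is almost reverse lexicographic. -/
theorem almostRevLex_of_strong_stanley_sections
    {n : ℕ} (S : Set (Fin n → ℕ))
    (hIdeal : IsMonomialIdeal S) (hArt : IsArtinianMonomialSet S)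
    (hSS : IsStronglyStable S)
    (hSSP : ∀ i, 2 ≤ i → i ≤ n - 1 → ∃ t : ℤ,
      ∀ α ∈ JSet S i, (fF S i α : ℤ) = t - 2 * (asum i α : ℤ) + 1) :
    AlmostRevLex S := by
  rintro M N hN hdeg ⟨j, hj, htail⟩
  by_contra hM
  obtain ⟨K, hjK, hNK, hN0⟩ := exists_last_ne_zero (f := N) (j := j) (by omega)
  have hM0 : ∀ l, K < l → M l = 0 := fun l hl => (htail l (hjK.trans_lt hl)) ▸ hN0 l hl
  have hMK : M K ≤ N K := by
    rcases hjK.lt_or_eq with h | rfl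
    · exact (htail K h).ge
    · exact hj.le
  have hfN := hN.fF_prefixExp_eq hIdeal hArt hNK hN0
  have hfM := lt_fF_of_notMem hIdeal hArt hM K
  have hdegN := mdeg_eq_asum_add N K hN0
  have hdegM := mdeg_eq_asum_add M K hM0
  have hdrop := fF_add_le_of_asum_le hIdeal hArt hSS hSSP K.isLt
    (hN.prefixExp_mem_JSet hIdeal hArt hNK) (prefixExp_mem_JSet hIdeal hArt hM K.isLt.le)
    (by omega) (by omega)
  omega
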